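/- Assume the setup: k ≥ 1 is an integer, P and T are strings with |P| ≤ |T|, Q is a primitive string with 128k·|Q| ≤ |P|, r ∈ {0,…,|Q|−1}, P̄ := Q^∞[r..r+|P|), T̄ := Q^∞[0..|T|), δ_H(P,P̄) ≤ 2k, and δ_H(T,T̄) ≤ 6k; τ_0 < τ_1 < … < τ_{b−1} are the elements of Mis(T,T̄), with τ_{−1} := −1 and τ_b := |T|, and R_i := {x ∈ ℤ : τ_{i−1} < x ≤ τ_i} for 0 ≤ i ≤ b; E := {τ − π : π ∈ Mis(P,P̄), τ ∈ Mis(T,T̄)}. Then for every set A of nonnegative integers and all integers s, t with 0 ≤ s ≤ t ≤ b satisfying δ_H(P,P̄) + (t − s) > k, it holds that Ext_k(P,T,A ∩ R_s) ∩ R_t ⊆ E + |P|. -/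

import Mathlib

/-- Mismatch positions of two (equal-length) strings:
`Mis(X,Y) = {i : X[i] ≠ Y[i]}`. -/
def mis {α : Type*} [DecidableEq α] [Inhabited α] (X Y : List α) : Finset ℕ :=
  (Finset.range (min X.length Y.length)).filter (fun i => X.getD i default ≠ Y.getD i default)

/-- Hamming distance of two (equal-length) strings: the number of mismatch positions. -/
def hdist {α : Type*} [DecidableEq α] [Inhabited α] (X Y : List α) : ℕ := (mis X Y).card

/-- The fragment `S[x..x+L)`. -/
def frag {α : Type*} (S : List α) (x L : ℕ) : List α := (S.drop x).take L

/-- `Q^∞[a..a+L)`: the string of length `L` whose `i`-th character is `Q[(a+i) mod |Q|]`. -/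
def qinf {α : Type*} [Inhabited α] (Q : List α) (a L : ℕ) : List α :=
  (List.range L).map (fun i => Q.getD ((a + i) % Q.length) default)

/-- A nonempty string is primitive if it is not of the form `Y^h` with `h ≥ 2`. -/
def Primitive {α : Type*} (Q : List α) : Prop :=
  Q ≠ [] ∧ ∀ (Y : List α) (h : ℕ), 2 ≤ h → Q ≠ (List.replicate h Y).flatten

/-- `Occ_k(P,T)`: the set of starting positions of `k`-mismatch occurrences of `P` in `T`. -/
def occSet {α : Type*} [DecidableEq α] [Inhabited α] (k : ℕ) (P T : List α) : Set ℕ :=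
  {x | x + P.length ≤ T.length ∧ hdist P (frag T x P.length) ≤ k}

/-- `Ext_k(P,T,A) = {x + |P| : x ∈ Occ_k(P,T) ∩ A}` (as a set of integers). -/
def extSet {α : Type*} [DecidableEq α] [Inhabited α] (k : ℕ) (P T : List α) (A : Set ℤ) :
    Set ℤ :=
  {y | ∃ x : ℕ, x ∈ occSet k P T ∧ (x : ℤ) ∈ A ∧ y = (x : ℤ) + P.length}


/-!
An occurrence of `P` at `x` is aligned with the period, `x ≡ r (mod |Q|)`: otherwise, `Q`
being primitive, `Q^∞[r..)` and `Q^∞[x..)` disagree once in every block of length `|Q|`, i.e.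
at least `128k` times over `|P|` letters, whereas the triangle inequality through `P` and
`T[x..)` bounds their distance by `2k + k + 6k`. Once aligned, `P̄` is the window of `T̄` at `x`.
If `x ∉ E`, no mismatch of `P` against `P̄` sits on a mismatch of `T` against `T̄`, so both
kinds are mismatches of `P` against `T[x..)`. The window contains `τ_s, …, τ_{t-1}`, hence
`δ_H(P, P̄) + (t - s) ≤ k`.
-/
open Function

theorem Function.Periodic.nat_gcd {β : Type*} {f : ℕ → β} {m n : ℕ} (hm : Periodic f m)
    (hn : Periodic f n) : Periodic f (Nat.gcd m n) := by
  induction m, n using Nat.gcd.induction with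
  | H0 n => simpa using hn
  | H1 m n _ ih =>
    rw [Nat.gcd_rec]
    refine ih (fun x => ?_) hm
    calc f (x + n % m) = f (x + n % m + n / m * m) := ((hm.nat_mul _) _).symm
      _ = f (x + n) := by rw [add_assoc, Nat.mod_add_div']
      _ = f x := hn x

theorem List.getD_flatten_replicate {α : Type*} (Y : List α) (d : α) {h i : ℕ}
    (hi : i < h * Y.length) : (replicate h Y).flatten.getD i d = Y.getD (i % Y.length) d := by
  induction h generalizing i with
  | zero => simp at hi
  | succ h ih =>
    rw [replicate_succ, flatten_cons]
    by_cases hiY : i < Y.length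
    · rw [getD_append _ _ _ _ hiY, Nat.mod_eq_of_lt hiY]
    · rw [Nat.succ_mul] at hi
      rw [getD_append_right _ _ _ _ (by omega), ih (by omega), ← Nat.mod_eq_sub_mod (by omega)]

section Periodicity

variable {α : Type*} [Inhabited α]

/-- The letter `Q^∞[n]`. -/
def cyclicGet (Q : List α) (n : ℕ) : α := Q.getD (n % Q.length) default

theorem periodic_cyclicGet (Q : List α) : Periodic (cyclicGet Q) Q.length := by
  simp [Periodic, cyclicGet]

theorem cyclicGet_congr (Q : List α) {n n' : ℕ} (h : n ≡ n' [MOD Q.length]) :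
    cyclicGet Q n = cyclicGet Q n' :=
  congrArg (Q.getD · default) h

theorem cyclicGet_of_lt {Q : List α} {n : ℕ} (hn : n < Q.length) :
    cyclicGet Q n = Q.getD n default := by
  rw [cyclicGet, Nat.mod_eq_of_lt hn]

theorem eq_flatten_replicate_take {Q : List α} {g : ℕ} (hQ : Q ≠ []) (hgQ : g ∣ Q.length)
    (hper : Periodic (cyclicGet Q) g) :
    Q = (List.replicate (Q.length / g) (Q.take g)).flatten := by
  have hq : 0 < Q.length := List.length_pos_iff.mpr hQ
  have hg : 0 < g := Nat.pos_of_dvd_of_pos hgQ hq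
  have hgq : Q.length / g * g = Q.length := Nat.div_mul_cancel hgQ
  have hlen : (Q.take g).length = g := by simpa using Nat.le_of_dvd hq hgQ
  refine List.ext_getElem (by simp [hlen, hgq]) fun i hi _ => ?_
  have hig : i % g < Q.length := (Nat.mod_lt _ hg).trans_le (Nat.le_of_dvd hq hgQ)
  rw [← List.getD_eq_getElem _ default, ← List.getD_eq_getElem _ default,
    List.getD_flatten_replicate _ _ (by rwa [hlen, hgq]), hlen, ← cyclicGet_of_lt hi]
  simp only [List.getD_eq_getElem?_getD, List.getElem?_take, Nat.mod_lt _ hg, if_true]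
  rw [← List.getD_eq_getElem?_getD, ← cyclicGet_of_lt hig]
  conv_lhs => rw [← Nat.mod_add_div i g, mul_comm]
  exact hper.nat_mul _ _

theorem Primitive.length_dvd_of_periodic {Q : List α} (hQ : Primitive Q) {d : ℕ}
    (hd : Periodic (cyclicGet Q) d) : Q.length ∣ d := by
  have hq : 0 < Q.length := List.length_pos_iff.mpr hQ.1
  obtain ⟨c, hc⟩ := Nat.gcd_dvd_right d Q.length
  have hg : 0 < Nat.gcd d Q.length := Nat.gcd_pos_of_pos_right d hq
  suffices c = 1 by
    rw [this, mul_one] at hc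
    exact hc ▸ Nat.gcd_dvd_left d Q.length
  by_contra hc1
  have hc0 : c ≠ 0 := by rintro rfl; omega
  have hqc : Q.length / Nat.gcd d Q.length = c :=
    Nat.div_eq_of_eq_mul_left hg (hc.trans (mul_comm _ _))
  refine hQ.2 (Q.take (Nat.gcd d Q.length)) c (by omega) ?_
  rw [← hqc]
  exact eq_flatten_replicate_take hQ.1 ⟨c, hc⟩ (hd.nat_gcd (periodic_cyclicGet Q))

theorem Primitive.modEq_of_forall_cyclicGet_eq {Q : List α} (hQ : Primitive Q) {a a' : ℕ}
    (h : ∀ i, cyclicGet Q (a + i) = cyclicGet Q (a' + i)) : a ≡ a' [MOD Q.length] := by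
  obtain ⟨p, hp⟩ : ∃ p, Q.length = p + 1 :=
    ⟨Q.length - 1, by have := List.length_pos_iff.mpr hQ.1; omega⟩
  -- the shift `a' + (|Q| - 1) a` is `a' - a` modulo `|Q|`
  have hd : Periodic (cyclicGet Q) (a' + p * a) := fun j =>
    calc cyclicGet Q (j + (a' + p * a)) = cyclicGet Q (a + (j + p * a)) := by
          rw [h]; ring_nf
      _ = cyclicGet Q (j + a * Q.length) := by rw [hp]; ring_nf
      _ = cyclicGet Q j := (periodic_cyclicGet Q).nat_mul a j
  have h0 : a' + p * a ≡ a + p * a [MOD Q.length] :=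
    (Nat.modEq_zero_iff_dvd.mpr (hQ.length_dvd_of_periodic hd)).trans
      (Nat.modEq_zero_iff_dvd.mpr ⟨a, by rw [hp]; ring⟩).symm
  exact (Nat.ModEq.add_right_cancel' _ h0).symm

end Periodicity

section Strings

variable {α : Type*}

theorem length_frag {S : List α} {x L : ℕ} (h : x + L ≤ S.length) :
    (frag S x L).length = L := by
  simp [frag]; omega

theorem getD_frag (S : List α) (x : ℕ) {L i : ℕ} (hi : i < L) (d : α) :
    (frag S x L).getD i d = S.getD (x + i) d := by
  simp [frag, List.getD_eq_getElem?_getD, hi]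

variable [Inhabited α]

@[simp]
theorem length_qinf (Q : List α) (a L : ℕ) : (qinf Q a L).length = L := by
  simp [qinf]

theorem getD_qinf (Q : List α) (a : ℕ) {L i : ℕ} (hi : i < L) (d : α) :
    (qinf Q a L).getD i d = cyclicGet Q (a + i) := by
  simp [qinf, cyclicGet, List.getD_eq_getElem?_getD, hi]

theorem qinf_congr (Q : List α) {a a' : ℕ} (h : a ≡ a' [MOD Q.length]) (L : ℕ) :
    qinf Q a L = qinf Q a' L := by
  simp only [qinf]
  congr 1
  funext i
  exact cyclicGet_congr Q (h.add_right i)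

theorem frag_qinf (Q : List α) (a : ℕ) {x L N : ℕ} (h : x + L ≤ N) :
    frag (qinf Q a N) x L = qinf Q (a + x) L := by
  refine List.ext_getElem (by simp [frag]; omega) fun i hi _ => ?_
  have hiL : i < L := (by simpa [frag] using hi : i < L ∧ _).1
  rw [← List.getD_eq_getElem _ default, ← List.getD_eq_getElem _ default, getD_frag _ _ hiL,
    getD_qinf _ _ (by omega), getD_qinf _ _ hiL, add_assoc]

variable [DecidableEq α]

theorem mem_mis {X Y : List α} {i : ℕ} :
    i ∈ mis X Y ↔ i < X.length ∧ i < Y.length ∧ X.getD i default ≠ Y.getD i default := by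
  simp [mis, and_assoc]

theorem hdist_comm (X Y : List α) : hdist X Y = hdist Y X := by
  unfold hdist
  congr 1
  ext i
  simp only [mem_mis]
  tauto

theorem mis_subset_union {X Y : List α} (Z : List α) (h : X.length = Y.length) :
    mis X Z ⊆ mis X Y ∪ mis Y Z := by
  intro i hi
  simp only [Finset.mem_union, mem_mis] at hi ⊢
  by_cases hXY : X.getD i default = Y.getD i default
  · exact Or.inr ⟨h ▸ hi.1, hi.2.1, hXY ▸ hi.2.2⟩
  · exact Or.inl ⟨hi.1, h ▸ hi.1, hXY⟩

theorem hdist_triangle {X Y : List α} (Z : List α) (h : X.length = Y.length) :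
    hdist X Z ≤ hdist X Y + hdist Y Z :=
  (Finset.card_le_card (mis_subset_union Z h)).trans (Finset.card_union_le _ _)

theorem hdist_frag_le (S S' : List α) (x L : ℕ) :
    hdist (frag S x L) (frag S' x L) ≤ hdist S S' := by
  refine Finset.card_le_card_of_injOn (x + ·) (fun i hi => ?_)
    (fun i _ j _ h => by simpa using h)
  simp only [Finset.mem_coe, mem_mis] at hi ⊢
  have hiL : i < L := by simp [frag] at hi; omega
  refine ⟨by simp [frag] at hi; omega, by simp [frag] at hi; omega, ?_⟩
  rw [getD_frag _ _ hiL, getD_frag _ _ hiL] at hi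
  exact hi.2.2

theorem Primitive.le_hdist_qinf {Q : List α} (hQ : Primitive Q) {a a' m L : ℕ}
    (h : ¬ a ≡ a' [MOD Q.length]) (hL : m * Q.length ≤ L) :
    m ≤ hdist (qinf Q a L) (qinf Q a' L) := by
  obtain ⟨i₀, hi₀⟩ : ∃ i, cyclicGet Q (a + i) ≠ cyclicGet Q (a' + i) := by
    by_contra! h'
    exact h (hQ.modEq_of_forall_cyclicGet_eq h')
  have hq : 0 < Q.length := List.length_pos_iff.mpr hQ.1
  -- one mismatch in each of the first `m` blocks of length `|Q|`, at offset `i₀ % |Q|`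
  have hblock : ∀ j, j * Q.length + i₀ % Q.length ≡ i₀ [MOD Q.length] := fun j => by
    simp [Nat.ModEq, Nat.add_mod]
  calc m = (Finset.range m).card := (Finset.card_range m).symm
    _ ≤ hdist (qinf Q a L) (qinf Q a' L) := by
      refine Finset.card_le_card_of_injOn (fun j => j * Q.length + i₀ % Q.length)
        (fun j hj => ?_) (fun j _ j' _ hjj' => ?_)
      · have hjL : j * Q.length + i₀ % Q.length < L :=
          calc j * Q.length + i₀ % Q.length < (j + 1) * Q.length := by
                rw [Nat.succ_mul]; exact Nat.add_lt_add_left (Nat.mod_lt _ hq) _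
            _ ≤ m * Q.length := Nat.mul_le_mul_right _ (Finset.mem_range.mp hj)
            _ ≤ L := hL
        simp only [Finset.mem_coe, mem_mis, length_qinf, getD_qinf _ _ hjL]
        refine ⟨hjL, hjL, ?_⟩
        rwa [cyclicGet_congr Q ((hblock j).add_left a),
          cyclicGet_congr Q ((hblock j).add_left a')]
      · simpa [hq.ne'] using hjj'

theorem Primitive.modEq_of_hdist_le {Q P T : List α} (hQ : Primitive Q) {r x a c k : ℕ}
    (hx : x + P.length ≤ T.length) (hP : hdist P (qinf Q r P.length) ≤ a)
    (hT : hdist T (qinf Q 0 T.length) ≤ c) (hocc : hdist P (frag T x P.length) ≤ k)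
    (hlen : (a + k + c + 1) * Q.length ≤ P.length) : r ≡ x [MOD Q.length] := by
  by_contra h
  have hlow := hQ.le_hdist_qinf h hlen
  have hwin : hdist (frag T x P.length) (qinf Q x P.length) ≤ c := by
    simpa [frag_qinf Q 0 hx] using (hdist_frag_le T (qinf Q 0 T.length) x P.length).trans hT
  have hup : hdist (qinf Q r P.length) (qinf Q x P.length) ≤ a + k + c :=
    calc _ ≤ hdist (qinf Q r P.length) P + hdist P (qinf Q x P.length) :=
          hdist_triangle _ (by simp)
      _ ≤ hdist P (qinf Q r P.length) +
            (hdist P (frag T x P.length) + hdist (frag T x P.length) (qinf Q x P.length)) := by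
          rw [hdist_comm (qinf Q r P.length)]
          exact Nat.add_le_add_left (hdist_triangle _ (length_frag hx).symm) _
      _ ≤ a + k + c := by omega
  omega

theorem hdist_add_card_window_le {P T U : List α} {x : ℕ} (hx : x + P.length ≤ T.length)
    (hE : ∀ π ∈ mis P (frag U x P.length), x + π ∉ mis T U) :
    hdist P (frag U x P.length) +
        ((Finset.range P.length).filter (fun i => x + i ∈ mis T U)).card ≤
      hdist P (frag T x P.length) := by
  set W := (Finset.range P.length).filter (fun i => x + i ∈ mis T U)
  have hTfrag := length_frag hx
  have hsub : mis P (frag U x P.length) ∪ W ⊆ mis P (frag T x P.length) := by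
    intro i hi
    rcases Finset.mem_union.mp hi with hπ | hw
    · have hT := hE i hπ
      simp only [mem_mis, hTfrag] at hπ hT ⊢
      have hU : x + i < U.length := by simp [frag] at hπ; omega
      rw [getD_frag _ _ hπ.1] at hπ ⊢
      have hTU : T.getD (x + i) default = U.getD (x + i) default :=
        not_not.mp fun hne => hT ⟨by omega, hU, hne⟩
      exact ⟨hπ.1, hπ.1, fun h => hπ.2.2 (h.trans hTU)⟩
    · obtain ⟨hiP, hmis⟩ := Finset.mem_filter.mp hw
      have hπ : i ∉ mis P (frag U x P.length) := fun hπ => hE i hπ hmis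
      rw [Finset.mem_range] at hiP
      simp only [mem_mis, hTfrag, getD_frag _ _ hiP, not_and, not_not] at hπ hmis ⊢
      have hPU := hπ hiP (by simp [frag]; omega)
      exact ⟨hiP, hiP, fun h => hmis.2.2 (h.symm.trans hPU)⟩
  have hdisj : Disjoint (mis P (frag U x P.length)) W := by
    rw [Finset.disjoint_right]
    intro i hw hπ
    exact hE i hπ (Finset.mem_filter.mp hw).2
  rw [hdist, ← Finset.card_union_of_disjoint hdisj]
  exact Finset.card_le_card hsub

theorem toNat_sub_le_card_window {M : Finset ℕ} {τ : ℤ → ℤ} {b s t : ℤ} {x L : ℕ}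
    (hmono : StrictMonoOn τ (Set.Ico 0 b))
    (hmem : ∀ i ∈ Set.Ico 0 b, ∃ m ∈ M, (m : ℤ) = τ i)
    (hs : 0 ≤ s) (htb : t ≤ b) (hx : x ≤ τ s) (hxL : τ (t - 1) < x + L) :
    (t - s).toNat ≤ ((Finset.range L).filter (fun i => x + i ∈ M)).card := by
  have hsub : Set.Ico s t ⊆ Set.Ico 0 b := fun i hi => ⟨hs.trans hi.1, hi.2.trans_le htb⟩
  have hwin : ∀ i ∈ Set.Ico s t, x ≤ τ i ∧ τ i < x + L := by
    rintro i ⟨hsi, hit⟩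
    have hτs : τ s ≤ τ i :=
      hmono.monotoneOn (hsub ⟨le_rfl, hsi.trans_lt hit⟩) (hsub ⟨hsi, hit⟩) hsi
    have hτt : τ i ≤ τ (t - 1) :=
      hmono.monotoneOn (hsub ⟨hsi, hit⟩) (hsub ⟨by omega, by omega⟩) (by omega)
    exact ⟨hx.trans hτs, hτt.trans_lt hxL⟩
  rw [← Int.card_Ico]
  refine Finset.card_le_card_of_injOn (fun i => (τ i - x).toNat) ?_ ?_ <;> rw [Finset.coe_Ico]
  · intro i hi
    obtain ⟨m, hm, hmi⟩ := hmem i (hsub hi)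
    have := hwin i hi
    simp only [Finset.coe_filter, Finset.mem_range, Set.mem_ofPred_eq]
    refine ⟨by omega, ?_⟩
    convert hm using 1
    omega
  · intro i hi j hj hij
    have := hwin i hi
    have := hwin j hj
    refine hmono.injOn (hsub hi) (hsub hj) ?_
    simp only at hij
    omega

end Strings

theorem stmt8_general {α : Type*} [DecidableEq α] [Inhabited α]
    (k : ℕ) (hk : 1 ≤ k) (P T Q : List α)
    (hQprim : Primitive Q) (hQP : 128 * k * Q.length ≤ P.length)
    (r : ℕ)
    (hPper : hdist P (qinf Q r P.length) ≤ 2 * k)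
    (hTper : hdist T (qinf Q 0 T.length) ≤ 6 * k)
    (b : ℕ) (τ : ℤ → ℤ)
    (hmono : ∀ i j : ℤ, 0 ≤ i → i < j → j < b → τ i < τ j)
    (hmem : ∀ i : ℤ, 0 ≤ i → i < b → ∃ m ∈ mis T (qinf Q 0 T.length), (m : ℤ) = τ i)
    (A : Set ℤ)
    (s t : ℤ) (hs : 0 ≤ s) (htb : t ≤ b)
    (hcase : (k : ℤ) < (hdist P (qinf Q r P.length) : ℤ) + (t - s)) :
    extSet k P T (A ∩ Set.Ioc (τ (s - 1)) (τ s)) ∩ Set.Ioc (τ (t - 1)) (τ t) ⊆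
      (fun z => z + (P.length : ℤ)) ''
        {z : ℤ | ∃ π ∈ mis P (qinf Q r P.length), ∃ τ' ∈ mis T (qinf Q 0 T.length),
          z = (τ' : ℤ) - (π : ℤ)} := by
  rintro _ ⟨⟨x, ⟨hxT, hocc⟩, ⟨-, -, hxs⟩, rfl⟩, hyt, -⟩
  have hrx : r ≡ x [MOD Q.length] :=
    hQprim.modEq_of_hdist_le hxT hPper hTper hocc (by nlinarith)
  have hPbar : qinf Q r P.length = frag (qinf Q 0 T.length) x P.length := by
    rw [frag_qinf Q 0 hxT, zero_add, qinf_congr Q hrx]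
  refine ⟨x, ?_, rfl⟩
  by_contra hE
  have hdisj : ∀ π ∈ mis P (frag (qinf Q 0 T.length) x P.length),
      x + π ∉ mis T (qinf Q 0 T.length) :=
    fun π hπ hm => hE ⟨π, hPbar ▸ hπ, x + π, hm, by push_cast; ring⟩
  have hwin := hdist_add_card_window_le hxT hdisj
  have hcount := toNat_sub_le_card_window (fun i hi j hj hij => hmono i j hi.1 hij hj.2)
    (fun i hi => hmem i hi.1 hi.2) hs htb hxs hyt
  rw [← hPbar] at hwin
  omega

/-- Second case of the key structural lemma: if `δ_H(P,P̄) + (t - s) > k` then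
`Ext_k(P, T, A ∩ R_s) ∩ R_t ⊆ E + |P|`, where
`E = {τ - π : π ∈ Mis(P,P̄), τ ∈ Mis(T,T̄)}`. -/
theorem stmt8 {α : Type*} [DecidableEq α] [Inhabited α]
    (k : ℕ) (hk : 1 ≤ k) (P T Q : List α) (hPT : P.length ≤ T.length)
    (hQprim : Primitive Q) (hQP : 128 * k * Q.length ≤ P.length)
    (r : ℕ) (hr : r < Q.length)
    (hPper : hdist P (qinf Q r P.length) ≤ 2 * k)
    (hTper : hdist T (qinf Q 0 T.length) ≤ 6 * k)
    (b : ℕ) (τ : ℤ → ℤ)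
    (hmono : ∀ i j : ℤ, 0 ≤ i → i < j → j < b → τ i < τ j)
    (hmem : ∀ i : ℤ, 0 ≤ i → i < b → ∃ m ∈ mis T (qinf Q 0 T.length), (m : ℤ) = τ i)
    (hsurj : ∀ m ∈ mis T (qinf Q 0 T.length), ∃ i : ℤ, 0 ≤ i ∧ i < b ∧ τ i = m)
    (hneg : τ (-1) = -1) (hend : τ b = T.length)
    (A : Set ℤ) (hA : ∀ x ∈ A, 0 ≤ x)
    (s t : ℤ) (hs : 0 ≤ s) (hst : s ≤ t) (htb : t ≤ b)
    (hcase : (k : ℤ) < (hdist P (qinf Q r P.length) : ℤ) + (t - s)) :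
    extSet k P T (A ∩ Set.Ioc (τ (s - 1)) (τ s)) ∩ Set.Ioc (τ (t - 1)) (τ t) ⊆
      (fun z => z + (P.length : ℤ)) ''
        {z : ℤ | ∃ π ∈ mis P (qinf Q r P.length), ∃ τ' ∈ mis T (qinf Q 0 T.length),
          z = (τ' : ℤ) - (π : ℤ)} :=
  stmt8_general k hk P T Q hQprim hQP r hPper hTper b τ hmono hmem A s t hs htb hcase
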